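/- arXiv:2510.15858 — 5 statements merged into one kernel-verified Lean document; each statement's English description precedes it below -/
import Mathlib

section
/- There is no quadratic tower K₀ ⊆ K₁ ⊆ ⋯ ⊆ Kₙ of subfields of ℝ whose top field Kₙ contains the real cube root of 2; that is, the duplication of the cube is impossible by ruler and compass. -/
noncomputable section

/-- A quadratic tower: a finite chain `K 0 ⊆ K 1 ⊆ ⋯ ⊆ K n` of subfields of `ℝ`
(viewed as intermediate fields of `ℚ ⊆ ℝ`), with `K 0` the prime subfield
(the copy of `ℚ` in `ℝ`) and each relative degree `[K (i+1) : K i] = 2`. -/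
structure QuadraticTower (n : ℕ) where
  K : Fin (n + 1) → IntermediateField ℚ ℝ
  bot : K 0 = ⊥
  le : ∀ i : Fin n, K i.castSucc ≤ K i.succ
  deg : ∀ i : Fin n,
    Module.finrank (K i.castSucc) (IntermediateField.extendScalars (le i)) = 2

/-!
By the tower law the `i`-th field of a quadratic tower has degree `2 ^ i` over `ℚ`, so every
element of the top field has a minimal polynomial whose degree divides `2 ^ n`. The minimal
polynomial of `2 ^ (1/3)` is `X ^ 3 - 2`, irreducible because `2` is not a cube in `ℚ`
(its `2`-adic valuation is not divisible by `3`), and `3 ∤ 2 ^ n`.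
-/

open IntermediateField Module Polynomial

theorem QuadraticTower.finrank_eq {n : ℕ} (T : QuadraticTower n) (i : Fin (n + 1)) :
    finrank ℚ (T.K i) = 2 ^ (i : ℕ) := by
  induction i using Fin.induction with
  | zero => simp [T.bot]
  | succ i ih =>
    rw [← relfinrank_bot_left, ← relfinrank_mul_relfinrank bot_le (T.le i), relfinrank_bot_left,
      ih, relfinrank_eq_finrank_of_le (T.le i), T.deg i, Fin.val_succ, Fin.val_castSucc, pow_succ]

theorem IntermediateField.natDegree_minpoly_dvd_finrank {F E : Type*} [Field F] [Field E]
    [Algebra F E] {K : IntermediateField F E} {x : E} (hx : x ∈ K) (hint : IsIntegral F x) :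
    (minpoly F x).natDegree ∣ finrank F K :=
  adjoin.finrank hint ▸ finrank_dvd_of_le_right (adjoin_simple_le_iff.mpr hx)

theorem Rat.pow_ne_prime {p k : ℕ} (hp : p.Prime) (hk : 1 < k) (q : ℚ) : q ^ k ≠ p := by
  have : Fact p.Prime := ⟨hp⟩
  intro h
  have hval := congrArg (padicValRat p) h
  rw [padicValRat.pow, padicValRat.self hp.one_lt] at hval
  have : (k : ℤ) = 1 := Int.eq_one_of_mul_eq_one_right k.cast_nonneg hval
  omega

theorem minpoly_natCast_rpow_inv {p k : ℕ} (hp : p.Prime) (hk : k.Prime) :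
    minpoly ℚ ((p : ℝ) ^ (k : ℝ)⁻¹) = X ^ k - C (p : ℚ) := by
  have hroot : ((p : ℝ) ^ (k : ℝ)⁻¹) ^ k = p :=
    Real.rpow_inv_natCast_pow (Nat.cast_nonneg p) hk.ne_zero
  refine (minpoly.eq_of_irreducible_of_monic ?_ ?_ (monic_X_pow_sub_C _ hk.ne_zero)).symm
  · exact X_pow_sub_C_irreducible_of_prime hk (Rat.pow_ne_prime hp hk.one_lt)
  · simp [hroot]

/-- No quadratic tower of subfields of `ℝ` has a top field containing the real cube
root of 2: the duplication of the cube is impossible by ruler and compass. -/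
theorem cbrt_two_not_in_quadraticTower :
    ¬ ∃ (n : ℕ) (T : QuadraticTower n), (2 : ℝ) ^ ((1 : ℝ) / 3) ∈ T.K (Fin.last n) := by
  rintro ⟨n, T, hx⟩
  have hmin : minpoly ℚ ((2 : ℝ) ^ ((1 : ℝ) / 3)) = X ^ 3 - C 2 := by
    simpa [one_div] using minpoly_natCast_rpow_inv Nat.prime_two Nat.prime_three
  have hint : IsIntegral ℚ ((2 : ℝ) ^ ((1 : ℝ) / 3)) :=
    minpoly.ne_zero_iff.mp (hmin ▸ X_pow_sub_C_ne_zero three_pos 2)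
  have hdvd := natDegree_minpoly_dvd_finrank hx hint
  rw [hmin, natDegree_X_pow_sub_C, T.finrank_eq, Fin.val_last] at hdvd
  exact absurd (Nat.prime_three.dvd_of_dvd_pow hdvd) (by norm_num)
end
end

section
/- The real number cos(2π/9) is a root of the polynomial 8X³ − 6X + 1, this polynomial is irreducible over ℚ, and hence [ℚ(cos(2π/9)) : ℚ] = 3. -/
open Polynomial

/-! Since `cos 3θ = 4 cos³ θ - 3 cos θ` and `cos (2π/3) = -1/2`, `cos (2π/9)` is a root of
`8 X ^ 3 - 6 X + 1`. A cubic without rational roots is irreducible over `ℚ`, and a rational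
root `x` would make `2 x` a rational, hence integral, root of the monic `X ^ 3 - 3 X + 1`,
whose values at integers are odd. -/

open Real in
theorem Real.cos_two_pi_div_nine_cubic :
    8 * cos (2 * π / 9) ^ 3 - 6 * cos (2 * π / 9) + 1 = 0 := by
  have h := cos_three_mul (2 * π / 9)
  rw [show 3 * (2 * π / 9) = π - π / 3 by ring, cos_pi_sub, cos_pi_div_three] at h
  linarith

theorem Int.pow_three_sub_three_mul_add_one_ne_zero (n : ℤ) : n ^ 3 - 3 * n + 1 ≠ 0 := by
  have hmod : ∀ a : ZMod 2, a ^ 3 - 3 * a + 1 ≠ 0 := by decide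
  exact fun h => hmod n (by exact_mod_cast congrArg (Int.cast : ℤ → ZMod 2) h)

theorem Rat.pow_three_sub_three_mul_add_one_ne_zero (y : ℚ) : y ^ 3 - 3 * y + 1 ≠ 0 := by
  intro hy
  have hroot : aeval y (X ^ 3 - C 3 * X + C 1 : ℤ[X]) = 0 := by
    simpa [map_ofNat] using hy
  obtain ⟨n, rfl⟩ := isInteger_of_is_root_of_monic (by monicity!) hroot
  have hn : (n : ℚ) ^ 3 - 3 * n + 1 = 0 := by simpa using hy
  exact Int.pow_three_sub_three_mul_add_one_ne_zero n (by exact_mod_cast hn)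

theorem irreducible_eight_X_pow_three_sub_six_X_add_one :
    Irreducible (C 8 * X ^ 3 - C 6 * X + C 1 : ℚ[X]) := by
  have hdeg : (C 8 * X ^ 3 - C 6 * X + C 1 : ℚ[X]).natDegree = 3 := by compute_degree!
  refine irreducible_of_degree_le_three_of_not_isRoot
    (by simp only [hdeg, Finset.mem_Icc]; omega) fun x hx => ?_
  apply Rat.pow_three_sub_three_mul_add_one_ne_zero (2 * x)
  simp only [IsRoot, eval_add, eval_sub, eval_mul, eval_pow, eval_X, eval_C] at hx
  linear_combination hx

open IntermediateField in
theorem IntermediateField.finrank_adjoin_simple_eq_natDegree_of_irreducible {K L : Type*}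
    [Field K] [Field L] [Algebra K L] {p : K[X]} {x : L} (hp : Irreducible p)
    (hx : aeval x p = 0) : Module.finrank K K⟮x⟯ = p.natDegree := by
  rw [adjoin.finrank (IsAlgebraic.isIntegral ⟨p, hp.ne_zero, hx⟩),
    ← minpoly.eq_of_irreducible hp hx, natDegree_mul_leadingCoeff_inv _ hp.ne_zero]

/-- `cos (2π/9)` is a root of `8 X ^ 3 - 6 X + 1`, this polynomial is irreducible
over `ℚ`, and hence `[ℚ(cos (2π/9)) : ℚ] = 3`. -/
theorem cos_two_pi_div_nine_root_irreducible_degree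
    (c : ℝ) (hc : c = Real.cos (2 * Real.pi / 9)) :
    aeval c (C 8 * X ^ 3 - C 6 * X + C 1 : ℚ[X]) = 0 ∧
      Irreducible (C 8 * X ^ 3 - C 6 * X + C 1 : ℚ[X]) ∧
      Module.finrank ℚ (IntermediateField.adjoin ℚ ({c} : Set ℝ)) = 3 := by
  have hroot : aeval c (C 8 * X ^ 3 - C 6 * X + C 1 : ℚ[X]) = 0 := by
    subst hc
    simpa using Real.cos_two_pi_div_nine_cubic
  refine ⟨hroot, irreducible_eight_X_pow_three_sub_six_X_add_one, ?_⟩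
  rw [IntermediateField.finrank_adjoin_simple_eq_natDegree_of_irreducible
    irreducible_eight_X_pow_three_sub_six_X_add_one hroot]
  compute_degree!
end

section
/- There is no quadratic tower K₀ ⊆ K₁ ⊆ ⋯ ⊆ Kₙ of subfields of ℝ whose top field contains cos(2π/9); that is, the angle 2π/3 cannot be trisected by ruler and compass. -/
noncomputable section

/-!
Every field in a quadratic tower has degree a power of `2` over `ℚ`, so the minimal polynomial
of any of its elements has degree dividing a power of `2`. By the triple-angle formula
`2 cos (2π/9)` is a root of `X³ - 3X + 1`, which is irreducible over `ℚ` (by Gauss's lemma it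
suffices to check this over `ℤ`, and modulo `2` it has no roots). Its degree `3` is not a
power of `2`.
-/

open Polynomial IntermediateField

theorem IntermediateField.minpoly_natDegree_dvd_finrank {F E : Type*} [Field F] [Field E]
    [Algebra F E] {K : IntermediateField F E} [FiniteDimensional F K] {x : E} (hx : x ∈ K) :
    (minpoly F x).natDegree ∣ Module.finrank F K := by
  rw [← minpoly_eq ⟨x, hx⟩]
  exact minpoly.degree_dvd (IsIntegral.of_finite F _)

namespace QuadraticTower

variable {n : ℕ} (T : QuadraticTower n)

theorem finrank_eq_two_pow (i : Fin (n + 1)) : Module.finrank ℚ (T.K i) = 2 ^ (i : ℕ) := by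
  induction i using Fin.induction with
  | zero => rw [T.bot, IntermediateField.finrank_bot, Fin.val_zero, pow_zero]
  | succ i ih =>
    rw [← relfinrank_bot_left, ← relfinrank_mul_relfinrank bot_le (T.le i), relfinrank_bot_left,
      ih, relfinrank_eq_finrank_of_le (T.le i), T.deg, Fin.val_succ, Fin.val_castSucc, pow_succ]

theorem minpoly_natDegree_dvd {i : Fin (n + 1)} {x : ℝ} (hx : x ∈ T.K i) :
    (minpoly ℚ x).natDegree ∣ 2 ^ (i : ℕ) := by
  have : FiniteDimensional ℚ (T.K i) :=
    Module.finite_of_finrank_pos (by rw [T.finrank_eq_two_pow]; positivity)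
  exact T.finrank_eq_two_pow i ▸ minpoly_natDegree_dvd_finrank hx

end QuadraticTower

theorem monic_X_pow_three_sub_three_mul_X_add_one {R : Type*} [CommRing R] :
    (X ^ 3 - 3 * X + 1 : R[X]).Monic := by
  monicity!

theorem natDegree_X_pow_three_sub_three_mul_X_add_one {R : Type*} [CommRing R] [Nontrivial R] :
    (X ^ 3 - 3 * X + 1 : R[X]).natDegree = 3 := by
  compute_degree!

theorem map_X_pow_three_sub_three_mul_X_add_one {R S : Type*} [CommRing R] [CommRing S]
    (f : R →+* S) : (X ^ 3 - 3 * X + 1 : R[X]).map f = X ^ 3 - 3 * X + 1 := by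
  simp only [Polynomial.map_add, Polynomial.map_sub, Polynomial.map_mul, Polynomial.map_pow,
    map_X, Polynomial.map_ofNat, Polynomial.map_one]

theorem irreducible_X_pow_three_sub_three_mul_X_add_one_int :
    Irreducible (X ^ 3 - 3 * X + 1 : ℤ[X]) := by
  refine monic_X_pow_three_sub_three_mul_X_add_one.irreducible_of_irreducible_map
    (Int.castRingHom (ZMod 2)) _ ?_
  have hmonic := monic_X_pow_three_sub_three_mul_X_add_one (R := ZMod 2)
  rw [map_X_pow_three_sub_three_mul_X_add_one,
    hmonic.irreducible_iff_roots_eq_zero_of_degree_le_three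
      (by rw [natDegree_X_pow_three_sub_three_mul_X_add_one]; norm_num)
      (by rw [natDegree_X_pow_three_sub_three_mul_X_add_one]),
    Multiset.eq_zero_iff_forall_notMem]
  intro x hx
  rw [mem_roots hmonic.ne_zero, IsRoot.def] at hx
  simp only [eval_add, eval_sub, eval_mul, eval_pow, eval_X, eval_ofNat, eval_one] at hx
  revert hx
  fin_cases x <;> decide

theorem irreducible_X_pow_three_sub_three_mul_X_add_one :
    Irreducible (X ^ 3 - 3 * X + 1 : ℚ[X]) := by
  rw [← map_X_pow_three_sub_three_mul_X_add_one (algebraMap ℤ ℚ)]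
  exact monic_X_pow_three_sub_three_mul_X_add_one.irreducible_iff_irreducible_map_fraction_map.mp
    irreducible_X_pow_three_sub_three_mul_X_add_one_int

theorem Real.two_mul_cos_three_mul (θ : ℝ) :
    (2 * cos θ) ^ 3 - 3 * (2 * cos θ) = 2 * cos (3 * θ) := by
  rw [cos_three_mul]
  ring

theorem aeval_two_mul_cos_two_pi_div_nine :
    aeval (2 * Real.cos (2 * Real.pi / 9)) (X ^ 3 - 3 * X + 1 : ℚ[X]) = 0 := by
  have hcos : Real.cos (3 * (2 * Real.pi / 9)) = -(1 / 2) := by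
    rw [show 3 * (2 * Real.pi / 9) = Real.pi - Real.pi / 3 by ring, Real.cos_pi_sub,
      Real.cos_pi_div_three]
  have := Real.two_mul_cos_three_mul (2 * Real.pi / 9)
  simp only [map_add, map_sub, map_mul, map_pow, aeval_X, map_ofNat, map_one]
  linarith

theorem minpoly_two_mul_cos_two_pi_div_nine :
    minpoly ℚ (2 * Real.cos (2 * Real.pi / 9)) = X ^ 3 - 3 * X + 1 :=
  (minpoly.eq_of_irreducible_of_monic irreducible_X_pow_three_sub_three_mul_X_add_one
    aeval_two_mul_cos_two_pi_div_nine monic_X_pow_three_sub_three_mul_X_add_one).symm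

/-- No quadratic tower of subfields of `ℝ` has a top field containing `cos (2π/9)`:
the angle `2π/3` cannot be trisected by ruler and compass. -/
theorem cos_two_pi_div_nine_not_in_quadraticTower :
    ¬ ∃ (n : ℕ) (T : QuadraticTower n), Real.cos (2 * Real.pi / 9) ∈ T.K (Fin.last n) := by
  rintro ⟨n, T, hcos⟩
  have hdvd := T.minpoly_natDegree_dvd (mul_mem (ofNat_mem _ 2) hcos)
  rw [minpoly_two_mul_cos_two_pi_div_nine, natDegree_X_pow_three_sub_three_mul_X_add_one] at hdvd
  exact absurd (Nat.prime_three.dvd_of_dvd_pow hdvd) (by norm_num)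
end
end

section
/- The degree of cos(2π/17) over ℚ equals 8, a power of 2: [ℚ(cos(2π/17)) : ℚ] = 8. -/
/-!
With `ζ = exp (2πi/n)`, the real number `2 cos (2π/n) = ζ + ζ⁻¹` lies in `ℚ(ζ)`, which has
degree `φ n` over `ℚ`. Over `ℚ(ζ + ζ⁻¹)` the number `ζ` is a root of `X² - (ζ + ζ⁻¹) X + 1`, and
it is not in that real field when `n > 2`, so `[ℚ(ζ) : ℚ(cos (2π/n))] = 2`. For `n = 17` this
gives `16 / 2 = 8`.
-/

open Polynomial IntermediateField Module

namespace IntermediateField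

variable {K L : Type*} [Field K] [Field L] [Algebra K L]

theorem finrank_adjoin_simple_map {L' : Type*} [Field L'] [Algebra K L'] (f : L →ₐ[K] L')
    (x : L) : finrank K K⟮f x⟯ = finrank K K⟮x⟯ := by
  rw [← Set.image_singleton, ← adjoin_map]
  exact (equivMap K⟮x⟯ f).toLinearEquiv.finrank_eq.symm

theorem adjoin_simple_algebraMap_mul {a : K} (ha : a ≠ 0) (x : L) :
    K⟮algebraMap K L a * x⟯ = K⟮x⟯ := by
  apply le_antisymm <;> rw [adjoin_simple_le_iff]
  · exact mul_mem (algebraMap_mem _ a) (mem_adjoin_simple_self K x)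
  · have h := mul_mem (algebraMap_mem K⟮algebraMap K L a * x⟯ a⁻¹)
      (mem_adjoin_simple_self K (algebraMap K L a * x))
    rwa [← mul_assoc, ← map_mul, inv_mul_cancel₀ ha, map_one, one_mul] at h

theorem finrank_adjoin_simple_eq_two_of_add_inv_mem (F : IntermediateField K L) {x : L}
    (hF : x + x⁻¹ ∈ F) (hx : x ∉ F) : finrank F F⟮x⟯ = 2 := by
  have hx0 : x ≠ 0 := by rintro rfl; exact hx (zero_mem F)
  set q : F[X] := X ^ 2 - C ⟨x + x⁻¹, hF⟩ * X + 1
  have hq : q.Monic := by unfold q; monicity!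
  have hq2 : q.natDegree = 2 := by unfold q; compute_degree!
  have hqx : aeval x q = 0 := by
    simp only [q, map_add, map_sub, map_mul, map_pow, aeval_X, aeval_C, map_one,
      algebraMap_apply]
    field_simp
    ring
  have hint : IsIntegral F x := ⟨q, hq, hqx⟩
  rw [adjoin.finrank hint]
  have hle : (minpoly F x).natDegree ≤ 2 :=
    hq2 ▸ natDegree_le_natDegree (minpoly.min F x hq hqx)
  have hne : (minpoly F x).natDegree ≠ 1 := by
    rw [Ne, minpoly.natDegree_eq_one_iff]
    rintro ⟨y, rfl⟩
    exact hx y.2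
  have hpos := minpoly.natDegree_pos hint
  omega

theorem finrank_adjoin_add_inv_mul_two {x : L} (hx : x ∉ K⟮x + x⁻¹⟯) :
    finrank K K⟮x + x⁻¹⟯ * 2 = finrank K K⟮x⟯ := by
  have hle : K⟮x + x⁻¹⟯ ≤ K⟮x⟯ := by
    rw [adjoin_simple_le_iff]
    have hmem := mem_adjoin_simple_self K x
    exact add_mem hmem (inv_mem hmem)
  rw [← finrank_bot_mul_relfinrank hle, relfinrank_eq_finrank_of_le hle, extendScalars_adjoin,
    finrank_adjoin_simple_eq_two_of_add_inv_mem _ (mem_adjoin_simple_self K _) hx]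

end IntermediateField

theorem IsPrimitiveRoot.finrank_adjoin_rat {K : Type*} [Field K] [CharZero K] {ζ : K} {n : ℕ}
    (h : IsPrimitiveRoot ζ n) (hn : 0 < n) : finrank ℚ ℚ⟮ζ⟯ = n.totient := by
  rw [adjoin.finrank ((h.isIntegral hn).tower_top), ← cyclotomic_eq_minpoly_rat h hn,
    natDegree_cyclotomic]

theorem Complex.exp_ofReal_mul_I_add_inv (θ : ℝ) :
    Complex.exp (θ * Complex.I) + (Complex.exp (θ * Complex.I))⁻¹ = ((2 * Real.cos θ : ℝ) : ℂ) := by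
  rw [← Complex.exp_neg, ← neg_mul]
  push_cast
  rw [Complex.two_cos]

theorem Complex.notMem_adjoin_ofReal {z : ℂ} (hz : z.im ≠ 0) (y : ℝ) : z ∉ ℚ⟮(y : ℂ)⟯ := by
  intro hmem
  have hle : ℚ⟮(y : ℂ)⟯ ≤ (Complex.ofRealAm.restrictScalars ℚ).fieldRange := by
    rw [adjoin_simple_le_iff]
    exact ⟨y, rfl⟩
  obtain ⟨r, rfl⟩ := hle hmem
  exact hz (Complex.ofReal_im r)

open Real in
theorem Real.finrank_adjoin_cos_two_pi_div_mul_two {n : ℕ} (hn : 2 < n) :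
    finrank ℚ ℚ⟮cos (2 * π / n)⟯ * 2 = n.totient := by
  set ζ := Complex.exp ((2 * π / n : ℝ) * Complex.I)
  have hζ : IsPrimitiveRoot ζ n := by
    convert Complex.isPrimitiveRoot_exp n (by omega) using 2
    push_cast; ring
  have hsum : ζ + ζ⁻¹ = ((2 * cos (2 * π / n) : ℝ) : ℂ) := Complex.exp_ofReal_mul_I_add_inv _
  have hζim : ζ.im ≠ 0 := by
    rw [Complex.exp_ofReal_mul_I_im]
    refine (sin_pos_of_pos_of_lt_pi (by positivity) ?_).ne'
    rw [div_lt_iff₀ (by positivity), mul_comm π]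
    exact mul_lt_mul_of_pos_right (by exact_mod_cast hn : (2 : ℝ) < n) pi_pos
  calc finrank ℚ ℚ⟮cos (2 * π / n)⟯ * 2
      = finrank ℚ ℚ⟮ζ + ζ⁻¹⟯ * 2 := by
        have h2c : ((2 * cos (2 * π / n) : ℝ) : ℂ) = Complex.ofRealAm.restrictScalars ℚ
            (algebraMap ℚ ℝ 2 * cos (2 * π / n)) := by simp
        rw [hsum, h2c, finrank_adjoin_simple_map, adjoin_simple_algebraMap_mul two_ne_zero]
    _ = finrank ℚ ℚ⟮ζ⟯ :=
        finrank_adjoin_add_inv_mul_two (hsum ▸ Complex.notMem_adjoin_ofReal hζim _)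
    _ = n.totient := hζ.finrank_adjoin_rat (by omega)

/-- The degree of `cos (2π/17)` over `ℚ` equals 8, a power of 2. -/
theorem finrank_adjoin_cos_two_pi_div_seventeen
    (c : ℝ) (hc : c = Real.cos (2 * Real.pi / 17)) :
    Module.finrank ℚ (IntermediateField.adjoin ℚ ({c} : Set ℝ)) = 8 := by
  have h := Real.finrank_adjoin_cos_two_pi_div_mul_two (n := 17) (by norm_num)
  rw [Nat.totient_prime (by norm_num)] at h
  push_cast at h
  rw [hc]
  omega
end

section
/- The real number sin(1) is transcendental over ℚ. -/
/-!
If `sin 1` were algebraic, so would be `e^i = cos 1 + i sin 1`: say `Q(e^i) = 0` with `Q ∈ ℤ[X]`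
and `Q(0) ≠ 0`. Hermite's construction (`LindemannWeierstrass.exp_polynomial_approx`, applied to
`∏ (X² + k²)`, whose roots are the `±k i`) gives, for every large prime `p`, an integer `N` prime to
`p` and `g ∈ ℤ[X]` with `N e^{ki} ≈ p g(ki)` up to `c^p / (p-1)!`. Multiplying `Q(e^i) = 0` by `N`,
the real part of the Gaussian integer `N Q(0) + p ∑ Qₖ g(ki)` is an integer not divisible by `p`,
yet smaller than `∑ |Qₖ| c^p / (p-1)! < 1` in absolute value.
-/

open Polynomial Complex Finset
open scoped Nat

noncomputable def prodXSqAddSq (d : ℕ) : ℤ[X] := ∏ k ∈ Icc 1 d, (X ^ 2 + C ((k : ℤ) ^ 2))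

theorem eval_zero_prodXSqAddSq_ne_zero (d : ℕ) : (prodXSqAddSq d).eval 0 ≠ 0 := by
  simp only [prodXSqAddSq, eval_prod, eval_add, eval_pow, eval_X, eval_C]
  exact prod_ne_zero_iff.2 fun k hk => by have := (mem_Icc.1 hk).1; positivity

theorem natCast_mul_I_mem_aroots_prodXSqAddSq {d k : ℕ} (hk : k ∈ Icc 1 d) :
    (k * I : ℂ) ∈ (prodXSqAddSq d).aroots ℂ := by
  have hmonic : (prodXSqAddSq d).Monic :=
    monic_prod_of_monic _ _ fun j _ => monic_X_pow_add_C _ two_ne_zero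
  rw [mem_aroots, prodXSqAddSq, map_prod]
  refine ⟨hmonic.ne_zero, prod_eq_zero hk ?_⟩
  rw [map_add, map_pow, aeval_X, aeval_C, algebraMap_int_eq, eq_intCast, mul_pow, I_sq]
  push_cast
  ring

theorem GaussianInt.toComplex_aeval (g : ℤ[X]) (z : GaussianInt) :
    (aeval z g : ℂ) = aeval (z : ℂ) g :=
  (aeval_algHom_apply GaussianInt.toComplex.toIntAlgHom z g).symm

theorem mul_add_natCast_mul_ne_zero {p : ℕ} (hp : p.Prime) {N a : ℤ} (hpN : ¬ (p : ℤ) ∣ N)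
    (ha : a ≠ 0) (hap : a.natAbs < p) (z : ℤ) : N * a + p * z ≠ 0 := by
  intro h
  rcases Int.Prime.dvd_mul' (m := N) (n := a) hp ⟨-z, by linear_combination h⟩ with hN | ha'
  · exact hpN hN
  · exact (Nat.le_of_dvd (Int.natAbs_pos.2 ha) (Int.natCast_dvd.1 ha')).not_gt hap

theorem one_le_sum_abs_coeff_mul_of_aeval_cexp_I_eq_zero {Q : ℤ[X]} (hQ : Q.coeff 0 ≠ 0)
    (hQE : aeval (cexp I) Q = 0) {p : ℕ} (hp : p.Prime) (hpQ : (Q.coeff 0).natAbs < p) {N : ℤ}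
    (hpN : ¬ (p : ℤ) ∣ N) (g : ℤ[X]) {ε : ℝ}
    (hε : ∀ k ∈ Icc 1 Q.natDegree, ‖N • cexp (k * I) - p • aeval (k * I : ℂ) g‖ ≤ ε) :
    1 ≤ (∑ k ∈ range Q.natDegree, |(Q.coeff (k + 1) : ℝ)|) * ε := by
  set d := Q.natDegree
  set K : ℂ := ∑ k ∈ range d, (Q.coeff (k + 1) : ℂ) * aeval (((k + 1 : ℕ) : ℂ) * I) g
  obtain ⟨w, hw⟩ : ∃ w : GaussianInt, (w : ℂ) = K :=
    ⟨∑ k ∈ range d, Q.coeff (k + 1) * aeval (⟨0, k + 1⟩ : GaussianInt) g, by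
      simp [K, map_sum, GaussianInt.toComplex_aeval, GaussianInt.toComplex_def']⟩
  have hrel : ((N * Q.coeff 0 : ℤ) : ℂ) + p * K = -∑ k ∈ range d, (Q.coeff (k + 1) : ℂ) *
      (N • cexp (((k + 1 : ℕ) : ℂ) * I) - p • aeval (((k + 1 : ℕ) : ℂ) * I) g) := by
    rw [aeval_eq_sum_range, sum_range_succ'] at hQE
    simp only [zsmul_eq_mul, nsmul_eq_mul, mul_sub, sum_sub_distrib, mul_left_comm _ (N : ℂ),
      mul_left_comm _ (p : ℂ), ← mul_sum, K, ← Complex.exp_nat_mul] at hQE ⊢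
    push_cast at hQE ⊢
    rw [zero_mul, Complex.exp_zero, mul_one] at hQE
    linear_combination (N : ℂ) * hQE
  have hre : ((N * Q.coeff 0 + p * w.re : ℤ) : ℝ) = (((N * Q.coeff 0 : ℤ) : ℂ) + p * K).re := by
    rw [← hw, ← ofReal_natCast, add_re, intCast_re, re_ofReal_mul, ← GaussianInt.intCast_re]
    push_cast; rfl
  calc (1 : ℝ) ≤ |((N * Q.coeff 0 + p * w.re : ℤ) : ℝ)| := by
        exact_mod_cast Int.one_le_abs (mul_add_natCast_mul_ne_zero hp hpN hQ hpQ w.re)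
    _ ≤ ‖((N * Q.coeff 0 : ℤ) : ℂ) + p * K‖ := hre ▸ abs_re_le_norm _
    _ ≤ ∑ k ∈ range d, |(Q.coeff (k + 1) : ℝ)| * ε := by
      rw [hrel, norm_neg]
      refine (norm_sum_le _ _).trans (sum_le_sum fun k hk => ?_)
      rw [norm_mul, Complex.norm_intCast]
      refine mul_le_mul_of_nonneg_left (hε _ (mem_Icc.2 ⟨by omega, ?_⟩)) (abs_nonneg _)
      simpa [Nat.succ_le_iff] using hk
    _ = _ := (sum_mul ..).symm

theorem aeval_cexp_I_ne_zero {Q : ℤ[X]} (hQ : Q.coeff 0 ≠ 0) : aeval (cexp I) Q ≠ 0 := by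
  intro hQE
  set f := prodXSqAddSq Q.natDegree
  set A : ℝ := ∑ k ∈ range Q.natDegree, |(Q.coeff (k + 1) : ℝ)|
  obtain ⟨c, hc⟩ := LindemannWeierstrass.exp_polynomial_approx f
    (eval_zero_prodXSqAddSq_ne_zero _)
  obtain ⟨p, hp, hpf, hpQ, hfact⟩ : ∃ p : ℕ, p.Prime ∧ (f.eval 0).natAbs < p ∧
      (Q.coeff 0).natAbs < p ∧ A * c ^ p < (p - 1)! :=
    ((Nat.frequently_atTop_iff_infinite.2 Nat.infinite_setOfPred_prime).and_eventually
      ((Filter.eventually_gt_atTop _).and ((Filter.eventually_gt_atTop _).and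
        (FloorSemiring.eventually_mul_pow_lt_factorial_sub A c 1)))).exists
  obtain ⟨N, hpN, g, -, hg⟩ := hc p hpf hp
  have := one_le_sum_abs_coeff_mul_of_aeval_cexp_I_eq_zero hQ hQE hp hpQ hpN g
    fun k hk => hg (natCast_mul_I_mem_aroots_prodXSqAddSq hk)
  rw [← mul_div_assoc, one_le_div (by positivity)] at this
  exact this.not_gt hfact

theorem transcendental_cexp_I : Transcendental ℤ (cexp I) := by
  rintro ⟨Q, hQ0, hQE⟩
  obtain ⟨R, hQR, hR⟩ := exists_eq_pow_rootMultiplicity_mul_and_not_dvd Q hQ0 0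
  rw [C_0, sub_zero] at hQR hR
  rw [X_dvd_iff] at hR
  rw [hQR, map_mul, map_pow, aeval_X, mul_eq_zero] at hQE
  exact aeval_cexp_I_ne_zero hR (hQE.resolve_left (pow_ne_zero _ (exp_ne_zero I)))

theorem isAlgebraic_cexp_mul_I_of_isAlgebraic_sin {x : ℝ} (h : IsAlgebraic ℚ (Real.sin x)) :
    IsAlgebraic ℚ (cexp (x * I)) := by
  have hsin : IsIntegral ℚ (Complex.sin x) := by
    rw [← ofReal_sin]; exact isAlgebraic_iff_isIntegral.1 (h.algebraMap (A := ℂ))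
  have hcos : IsIntegral ℚ (Complex.cos x) := by
    refine isAlgebraic_iff_isIntegral.1 (IsAlgebraic.of_pow two_pos ?_)
    rw [cos_sq']
    exact (isIntegral_one.sub (hsin.pow 2)).isAlgebraic
  have hI : IsIntegral ℚ I := ⟨X ^ 2 + 1, monic_X_pow_add_C 1 two_ne_zero, by simp⟩
  rw [exp_mul_I]
  exact (hcos.add (hsin.mul hI)).isAlgebraic

/-- `sin 1` is transcendental over `ℚ`. -/
theorem sin_one_transcendental : Transcendental ℚ (Real.sin 1) := fun h =>
  transcendental_cexp_I <| (IsFractionRing.isAlgebraic_iff ℤ ℚ ℂ).2 <| by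
    simpa using isAlgebraic_cexp_mul_I_of_isAlgebraic_sin h
end
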